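/- Let Λ ⊂ ℝ^n be a full-rank lattice with covolume V(Λ), and let σ_s > 0. Then for every ε > 0, the set {t ∈ ℝ^n : f_{σ_s}(Λ+t) ≤ ε/V(Λ)} has measure at most ε under the Gaussian measure N(0, σ_s² I_n). -/

import Mathlib

open MeasureTheory Real Filter Pointwise
open scoped ENNReal RealInnerProductSpace

noncomputable section

/-- The (continuous) Gaussian density with parameter `σ` on `ℝⁿ`:
`f_σ(x) = (2πσ²)^{-n/2} exp(-‖x‖²/(2σ²))`. -/
def gaussF (n : ℕ) (σ : ℝ) (x : EuclideanSpace ℝ (Fin n)) : ℝ :=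
  (2 * π * σ ^ 2) ^ (-(n : ℝ) / 2) * Real.exp (-‖x‖ ^ 2 / (2 * σ ^ 2))

/-- The Gaussian mass `f_σ(S) = Σ_{y ∈ S} f_σ(y)` of a (countable) set `S ⊆ ℝⁿ`. -/
def gaussMass (n : ℕ) (σ : ℝ) (S : Set (EuclideanSpace ℝ (Fin n))) : ℝ :=
  ∑' y : S, gaussF n σ y

/-- The Gaussian measure `N(0, σ² Iₙ)` on `ℝⁿ`, given by its density w.r.t. Lebesgue measure. -/
def gaussMeasure (n : ℕ) (σ : ℝ) : Measure (EuclideanSpace ℝ (Fin n)) :=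
  volume.withDensity fun x => ENNReal.ofReal (gaussF n σ x)

/-- The coset `S + t` of a set `S ⊆ ℝⁿ`, i.e. `{x | x - t ∈ S}`. -/
def coset (n : ℕ) (S : Set (EuclideanSpace ℝ (Fin n))) (t : EuclideanSpace ℝ (Fin n)) :
    Set (EuclideanSpace ℝ (Fin n)) := {x | x - t ∈ S}

/-- The Voronoi cell of `S`: `{x | ⟪x,y⟫ ≤ ‖y‖²/2 for all y ∈ S}`. -/
def voronoi (n : ℕ) (S : Set (EuclideanSpace ℝ (Fin n))) : Set (EuclideanSpace ℝ (Fin n)) :=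
  {x | ∀ y ∈ S, ⟪x, y⟫ ≤ ‖y‖ ^ 2 / 2}

/-- The inverse error function `err⁻¹_ε(Λ)`: the least `s > 0` such that a standard Gaussian
leaves `s · V(Λ)` with probability at most `ε`. -/
def errInv (n : ℕ) (ε : ℝ) (S : Set (EuclideanSpace ℝ (Fin n))) : ℝ :=
  sInf {s : ℝ | 0 < s ∧ gaussMeasure n 1 ((s • voronoi n S)ᶜ) ≤ ENNReal.ofReal ε}

/-- The Shannon entropy (in nats) of the discrete Gaussian `D_{S,σ}` supported on `S`,
which assigns mass `f_σ(y)/f_σ(S)` to each `y ∈ S`. -/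
def dgEntropy (n : ℕ) (σ : ℝ) (S : Set (EuclideanSpace ℝ (Fin n))) : ℝ :=
  -∑' y : S, (gaussF n σ y / gaussMass n σ S) * Real.log (gaussF n σ y / gaussMass n σ S)

/-- The flatness factor `ε_Λ(σ) = sup_{x ∈ V(Λ)} |V(Λ)·f_σ(Λ+x) − 1|`. -/
def flatness (n : ℕ) (L : Submodule ℤ (EuclideanSpace ℝ (Fin n))) (σ : ℝ) : ℝ :=
  ⨆ x : voronoi n (L : Set (EuclideanSpace ℝ (Fin n))),
    |ZLattice.covolume L volume *
        gaussMass n σ (coset n (L : Set (EuclideanSpace ℝ (Fin n))) x) - 1|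

/-!
Unfolding the Gaussian integral over a fundamental domain `F` of `Λ` gives
`∫_A f_σ = ∫_{F ∩ A} f_σ(Λ + t) dt` for every `Λ`-periodic set `A`. For
`A = {t | f_σ(Λ + t) ≤ ε / V(Λ)}` the integrand is at most `ε / V(Λ)` and `vol F = V(Λ)`,
so `A` has Gaussian measure at most `ε`.
-/

section Periodization

variable (G : Type*) {E : Type*} [AddGroup G] [AddAction G E]

def periodization (f : E → ℝ≥0∞) (x : E) : ℝ≥0∞ :=
  ∑' g : G, f (g +ᵥ x)

variable {G}

theorem periodization_vadd (f : E → ℝ≥0∞) (g : G) (x : E) :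
    periodization G f (g +ᵥ x) = periodization G f x := by
  simp_rw [periodization, vadd_vadd]
  exact (Equiv.addRight g).tsum_eq fun h => f (h +ᵥ x)

variable [Countable G] [MeasurableSpace G] [MeasurableSpace E] [MeasurableVAdd G E]
  {μ : Measure E} [VAddInvariantMeasure G E μ] {F : Set E} {f : E → ℝ≥0∞}

theorem Measurable.periodization (hf : Measurable f) : Measurable (periodization G f) :=
  Measurable.tsum fun g => hf.comp (measurable_const_vadd g)

namespace MeasureTheory.IsAddFundamentalDomain

theorem setLIntegral_eq_setLIntegral_indicator_periodization
    (hF : IsAddFundamentalDomain G F μ) (hf : Measurable f) {A : Set E} (hA : MeasurableSet A)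
    (hA_inv : ∀ (g : G) x, g +ᵥ x ∈ A ↔ x ∈ A) :
    ∫⁻ x in A, f x ∂μ = ∫⁻ x in F, A.indicator (periodization G f) x ∂μ := by
  have h_sum : ∀ x, ∑' g : G, A.indicator f (g +ᵥ x) = A.indicator (periodization G f) x := by
    intro x
    by_cases hx : x ∈ A <;> simp [periodization, hx, hA_inv]
  rw [← lintegral_indicator hA, hF.lintegral_eq_tsum'']
  simp_rw [← h_sum]
  exact (lintegral_tsum fun g =>
    ((hf.indicator hA).comp (measurable_const_vadd g)).aemeasurable).symm

theorem lintegral_eq_setLIntegral_periodization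
    (hF : IsAddFundamentalDomain G F μ) (hf : Measurable f) :
    ∫⁻ x, f x ∂μ = ∫⁻ x in F, periodization G f x ∂μ := by
  simpa using hF.setLIntegral_eq_setLIntegral_indicator_periodization hf MeasurableSet.univ
    (fun _ _ => Iff.rfl)

theorem withDensity_setOf_periodization_le
    (hF : IsAddFundamentalDomain G F μ) (hf : Measurable f) (c : ℝ≥0∞) :
    μ.withDensity f {x | periodization G f x ≤ c} ≤ c * μ F := by
  have hA : MeasurableSet {x | periodization G f x ≤ c} :=
    measurableSet_le hf.periodization measurable_const
  rw [withDensity_apply _ hA, hF.setLIntegral_eq_setLIntegral_indicator_periodization hf hA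
    (fun g x => by simp only [Set.mem_ofPred_eq, periodization_vadd]), ← setLIntegral_const]
  exact lintegral_mono fun x => Set.indicator_apply_le (g := fun _ => c) id

theorem withDensity_setOf_periodization_eq_top
    (hF : IsAddFundamentalDomain G F μ) (hf : Measurable f) (hf_fin : ∫⁻ x, f x ∂μ ≠ ⊤) :
    μ.withDensity f {x | periodization G f x = ⊤} = 0 := by
  have hA : MeasurableSet {x | periodization G f x = ⊤} :=
    hf.periodization (measurableSet_singleton ⊤)
  have h_fin : ∀ᵐ x ∂μ.restrict F, periodization G f x < ⊤ :=
    ae_lt_top hf.periodization (hF.lintegral_eq_setLIntegral_periodization hf ▸ hf_fin)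
  rw [withDensity_apply _ hA, hF.setLIntegral_eq_setLIntegral_indicator_periodization hf hA
    (fun g x => by simp only [Set.mem_ofPred_eq, periodization_vadd])]
  exact (lintegral_congr_ae (h_fin.mono fun x hx => by simp [hx.ne])).trans lintegral_zero

/-- The form in which real-valued sums enter: a divergent sum has `toReal = 0`, but when
`∫⁻ f < ⊤` the points where the periodization diverges carry no mass. -/
theorem withDensity_setOf_toReal_periodization_le
    (hF : IsAddFundamentalDomain G F μ) (hf : Measurable f) (hf_fin : ∫⁻ x, f x ∂μ ≠ ⊤)
    (c : ℝ) :
    μ.withDensity f {x | (periodization G f x).toReal ≤ c} ≤ ENNReal.ofReal c * μ F := by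
  have h_sub : {x | (periodization G f x).toReal ≤ c} ⊆
      {x | periodization G f x ≤ ENNReal.ofReal c} ∪ {x | periodization G f x = ⊤} := by
    intro x hx
    by_cases h_top : periodization G f x = ⊤
    · exact Or.inr h_top
    · exact Or.inl ((ENNReal.ofReal_toReal h_top).symm.trans_le (ENNReal.ofReal_le_ofReal hx))
  calc μ.withDensity f {x | (periodization G f x).toReal ≤ c}
      ≤ μ.withDensity f {x | periodization G f x ≤ ENNReal.ofReal c}
        + μ.withDensity f {x | periodization G f x = ⊤} :=
        (measure_mono h_sub).trans (measure_union_le _ _)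
    _ ≤ ENNReal.ofReal c * μ F := by
      rw [hF.withDensity_setOf_periodization_eq_top hf hf_fin, add_zero]
      exact hF.withDensity_setOf_periodization_le hf _

end MeasureTheory.IsAddFundamentalDomain

end Periodization

theorem ZLattice.measure_fundamentalDomain_ofZLatticeBasis {E ι : Type*} [NormedAddCommGroup E]
    [NormedSpace ℝ E] [FiniteDimensional ℝ E] [MeasurableSpace E] [BorelSpace E]
    (L : Submodule ℤ E) [DiscreteTopology L] [IsZLattice ℝ L] [Finite ι]
    (b : Module.Basis ι ℤ L) (μ : Measure E) [μ.IsAddHaarMeasure] :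
    μ (ZSpan.fundamentalDomain (b.ofZLatticeBasis ℝ)) =
      ENNReal.ofReal (ZLattice.covolume L μ) := by
  rw [ZLattice.covolume_eq_measure_fundamentalDomain L μ (ZLattice.isAddFundamentalDomain b μ),
    measureReal_def, ENNReal.ofReal_toReal (ZSpan.fundamentalDomain_isBounded _).measure_lt_top.ne]

theorem gaussF_nonneg (n : ℕ) (σ : ℝ) (x : EuclideanSpace ℝ (Fin n)) : 0 ≤ gaussF n σ x :=
  mul_nonneg (Real.rpow_nonneg (by positivity) _) (Real.exp_nonneg _)

@[fun_prop]
theorem continuous_gaussF (n : ℕ) (σ : ℝ) : Continuous (gaussF n σ) := by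
  unfold gaussF
  fun_prop

theorem integrable_gaussF (n : ℕ) {σ : ℝ} (hσ : 0 < σ) : Integrable (gaussF n σ) := by
  have hb : (0 : ℝ) < 1 / (2 * σ ^ 2) := by positivity
  have h := (GaussianFourier.integrable_cexp_neg_mul_sq_norm_add (V := EuclideanSpace ℝ (Fin n))
      (b := ((1 / (2 * σ ^ 2) : ℝ) : ℂ)) (by rwa [Complex.ofReal_re]) 0 0).norm
  refine (h.const_mul ((2 * π * σ ^ 2) ^ (-(n : ℝ) / 2))).congr (ae_of_all _ fun v => ?_)
  have h_exp : -(((1 / (2 * σ ^ 2) : ℝ)) : ℂ) * (‖v‖ : ℂ) ^ 2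
      = ((-‖v‖ ^ 2 / (2 * σ ^ 2) : ℝ) : ℂ) := by
    push_cast; ring
  simp only [Complex.norm_exp, zero_mul, add_zero, h_exp, Complex.ofReal_re, gaussF]

theorem gaussMass_coset (n : ℕ) (σ : ℝ) (S : Set (EuclideanSpace ℝ (Fin n)))
    (t : EuclideanSpace ℝ (Fin n)) :
    gaussMass n σ (coset n S t) = ∑' s : S, gaussF n σ (s + t) :=
  ((Equiv.subtypeEquiv (Equiv.addRight t) fun x => by simp [coset]).tsum_eq
    fun y : coset n S t => gaussF n σ y).symm

theorem gaussMass_coset_eq_toReal_periodization (n : ℕ) (σ : ℝ)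
    (L : Submodule ℤ (EuclideanSpace ℝ (Fin n))) (t : EuclideanSpace ℝ (Fin n)) :
    gaussMass n σ (coset n (L : Set (EuclideanSpace ℝ (Fin n))) t)
      = (periodization L (fun x => ENNReal.ofReal (gaussF n σ x)) t).toReal := by
  rw [gaussMass_coset, periodization, ENNReal.tsum_toReal_eq fun _ => ENNReal.ofReal_ne_top]
  simp only [ENNReal.toReal_ofReal (gaussF_nonneg _ _ _)]
  rfl

/-- the Gaussian mass of a shifted lattice coset is unlikely to be small:
the set of shifts `t` with `f_{σ_s}(Λ+t) ≤ ε/V(Λ)` has Gaussian measure at most `ε`. -/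
theorem gaussian_mass_lower_bound (n : ℕ) (L : Submodule ℤ (EuclideanSpace ℝ (Fin n)))
    [DiscreteTopology L] [IsZLattice ℝ L]
    (σs : ℝ) (hσs : 0 < σs) (ε : ℝ) (hε : 0 < ε) :
    gaussMeasure n σs {t : EuclideanSpace ℝ (Fin n) |
      gaussMass n σs (coset n (L : Set (EuclideanSpace ℝ (Fin n))) t) ≤ ε / ZLattice.covolume L volume}
      ≤ ENNReal.ofReal ε := by
  have : MeasurableVAdd L (EuclideanSpace ℝ (Fin n)) :=
    inferInstanceAs (MeasurableVAdd L.toAddSubgroup _)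
  have : VAddInvariantMeasure L (EuclideanSpace ℝ (Fin n)) volume :=
    inferInstanceAs (VAddInvariantMeasure L.toAddSubgroup _ _)
  have hV := ZLattice.covolume_pos L volume
  let b := Module.Free.chooseBasis ℤ L
  have hF := ZLattice.isAddFundamentalDomain b volume
  simp_rw [gaussMass_coset_eq_toReal_periodization]
  calc _ ≤ ENNReal.ofReal (ε / ZLattice.covolume L volume)
        * volume (ZSpan.fundamentalDomain (b.ofZLatticeBasis ℝ)) :=
        hF.withDensity_setOf_toReal_periodization_le (by fun_prop)
          (integrable_gaussF n hσs).lintegral_lt_top.ne _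
    _ = ENNReal.ofReal ε := by
      rw [ZLattice.measure_fundamentalDomain_ofZLatticeBasis,
        ← ENNReal.ofReal_mul (div_pos hε hV).le, div_mul_cancel₀ _ hV.ne']
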